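/- Define K(t,r,s) = ( −(r+1)^{−1} − (r−s)/(2t) ) exp(−(r−s)²/(4t)) + ( (r+1)^{−1} + (r+s)/(2t) ) exp(−(r+s)²/(4t)). There exist constants C > 0 and M ≥ 1 such that for every m ≥ M, every r with 10 ≤ r ≤ 11, and every s with m ≤ s ≤ 2m, one has K(m², r, s) ≥ C/m. -/
import Mathlib


/-- The kernel obtained by differentiating the half-line Dirichlet heat formula:
`K(t,r,s) = (-(r+1)⁻¹ - (r-s)/(2t)) e^{-(r-s)²/(4t)} + ((r+1)⁻¹ + (r+s)/(2t)) e^{-(r+s)²/(4t)}`. -/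
noncomputable def Kker (t r s : ℝ) : ℝ :=
  (-(r + 1)⁻¹ - (r - s) / (2 * t)) * Real.exp (-(r - s) ^ 2 / (4 * t)) +
    ((r + 1)⁻¹ + (r + s) / (2 * t)) * Real.exp (-(r + s) ^ 2 / (4 * t))

/-- `exp x ≤ 1/(1-x)` for `x < 1`. -/
lemma exp_le_inv_one_sub {x : ℝ} (hx : x < 1) : Real.exp x ≤ (1 - x)⁻¹ := by
  have hx1 : (0:ℝ) < 1 - x := by linarith
  have h1 : 1 - x ≤ Real.exp (-x) := by
    have := Real.add_one_le_exp (-x); linarith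
  have h2 : Real.exp x * Real.exp (-x) = 1 := by
    rw [← Real.exp_add]; simp
  have h3 : Real.exp x * (1 - x) ≤ 1 := by
    nlinarith [Real.exp_pos x]
  rw [inv_eq_one_div, le_div_iff₀ hx1]
  linarith

set_option maxHeartbeats 4000000 in
/-- For large `m`, `K(m², r, s) ≥ C/m` for all `10 ≤ r ≤ 11` and `m ≤ s ≤ 2m`. -/
theorem Kker_lower_bound :
    ∃ C : ℝ, 0 < C ∧ ∃ M : ℝ, 1 ≤ M ∧ ∀ m : ℝ, M ≤ m →
      ∀ r : ℝ, 10 ≤ r → r ≤ 11 → ∀ s : ℝ, m ≤ s → s ≤ 2 * m →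
        C / m ≤ Kker (m ^ 2) r s := by
  refine ⟨1/100, by norm_num, 1000, by norm_num, ?_⟩
  intro m hm r hr1 hr2 s hs1 hs2
  have hm0 : (0:ℝ) < m := by linarith
  set t : ℝ := m ^ 2 with ht
  have ht0 : (0:ℝ) < t := by positivity
  have htne : t ≠ 0 := ne_of_gt ht0
  have hr0 : (0:ℝ) < r + 1 := by linarith
  set A : ℝ := Real.exp (-(r - s) ^ 2 / (4 * t)) with hA
  set B : ℝ := Real.exp (-(r + s) ^ 2 / (4 * t)) with hB
  have hApos : 0 < A := Real.exp_pos _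
  have hBpos : 0 < B := Real.exp_pos _
  set x : ℝ := r * s / t with hx
  have hx0 : 0 ≤ x := div_nonneg (by nlinarith) ht0.le
  have hxle : x ≤ 22 / 1000 := by
    rw [hx, ht, div_le_div_iff₀ (by positivity) (by norm_num)]
    nlinarith
  -- A = B * exp x
  have hAeq : A = B * Real.exp x := by
    rw [hA, hB, ← Real.exp_add]
    congr 1
    rw [hx]
    field_simp
    ring
  have hexp : Real.exp x ≤ 103 / 100 := by
    have h1 : Real.exp x ≤ (1 - x)⁻¹ := exp_le_inv_one_sub (by linarith)
    have h2 : (1 - x)⁻¹ ≤ ((978:ℝ)/1000)⁻¹ :=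
      inv_anti₀ (by norm_num) (by linarith)
    have h3 : (((978:ℝ)/1000)⁻¹ : ℝ) ≤ 103/100 := by norm_num
    linarith
  -- lower bound for B
  have hBlb : (6:ℝ)/25 ≤ B := by
    have hble : -(253/250 : ℝ) ≤ -(r + s) ^ 2 / (4 * t) := by
      rw [ht, le_div_iff₀ (by positivity)]
      nlinarith
    have h1 : Real.exp (-(253/250 : ℝ)) ≤ B := by
      rw [hB]; exact Real.exp_le_exp.2 hble
    have h2 : Real.exp (253/250 : ℝ) ≤ 25/6 := by
      have heq : Real.exp (253/250 : ℝ) = Real.exp (253/500) * Real.exp (253/500) := by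
        rw [← Real.exp_add]; norm_num
      have h3 : Real.exp (253/500 : ℝ) ≤ (1 - 253/500)⁻¹ := exp_le_inv_one_sub (by norm_num)
      have h4 : ((1: ℝ) - 253/500)⁻¹ = 500/247 := by norm_num
      rw [heq]
      nlinarith [Real.exp_pos (253/500 : ℝ)]
    have h5 : (6:ℝ)/25 ≤ Real.exp (-(253/250 : ℝ)) := by
      rw [Real.exp_neg]
      calc (6:ℝ)/25 = ((25:ℝ)/6)⁻¹ := by norm_num
      _ ≤ _ := inv_anti₀ (Real.exp_pos _) h2
    linarith
  -- rewrite the kernel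
  have hkey : Kker t r s = ((r+1)⁻¹ - (s - r)/(2*t)) * (B - A) + (s/t) * B := by
    simp only [Kker]
    rw [← hA, ← hB]
    field_simp
    ring
  rw [hkey]
  set u : ℝ := (r + 1)⁻¹ with hu
  have hu0 : 0 < u := by positivity
  have hur : u * (r + 1) = 1 := inv_mul_cancel₀ (ne_of_gt hr0)
  have hu12 : (1:ℝ)/12 ≤ u := by
    calc (1:ℝ)/12 = ((12:ℝ))⁻¹ := by norm_num
    _ ≤ (r+1)⁻¹ := inv_anti₀ hr0 (by linarith)
  have hu11 : u ≤ (1:ℝ)/11 := by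
    calc u ≤ ((11:ℝ))⁻¹ := inv_anti₀ (by norm_num) (by linarith)
    _ = 1/11 := by norm_num
  -- the coefficient c := u - (s-r)/(2t)
  have hsr : 0 ≤ (s - r)/(2*t) := div_nonneg (by linarith) (by positivity)
  have hsrle : (s - r)/(2*t) ≤ 1/m := by
    rw [div_le_div_iff₀ (by positivity) hm0, ht]
    nlinarith
  have hminv : (1:ℝ)/m ≤ 1/12 := by
    rw [div_le_div_iff₀ hm0 (by norm_num)]; linarith
  have hc0 : 0 ≤ u - (s - r)/(2*t) := by linarith
  have hcu : u - (s - r)/(2*t) ≤ u := by linarith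
  -- A - B ≤ (103/100) * x * B
  have hAmB : A - B ≤ (103/100) * x * B := by
    have h2 : 1 - x ≤ Real.exp (-x) := by
      have := Real.add_one_le_exp (-x); linarith
    have h2' : Real.exp x * Real.exp (-x) = 1 := by
      rw [← Real.exp_add]; simp
    have h1 : Real.exp x - 1 ≤ x * Real.exp x := by
      nlinarith [Real.exp_pos x, Real.exp_pos (-x)]
    have h3 : x * Real.exp x ≤ (103/100) * x := by nlinarith
    have hABid : A - B = B * (Real.exp x - 1) := by rw [hAeq]; ring
    rw [hABid]
    nlinarith
  have hABord : B ≤ A := by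
    rw [hAeq]
    nlinarith [Real.exp_pos x, Real.add_one_le_exp x]
  have hq0 : 0 < s / t := div_pos (by linarith) ht0
  -- u * x ≤ (11/12) * (s/t)
  have hxq : x = r * (s/t) := by rw [hx, mul_div_assoc]
  have hru : r * u ≤ 11/12 := by nlinarith
  have hux : u * x ≤ (11/12) * (s/t) := by
    rw [hxq]
    nlinarith
  -- first term bound
  have hterm1 : -(u * ((103/100) * x * B)) ≤ (u - (s - r)/(2*t)) * (B - A) := by
    have h1 : (u - (s - r)/(2*t)) * (A - B) ≤ u * (A - B) := by
      nlinarith [sub_nonneg.2 hABord]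
    have h2 : u * (A - B) ≤ u * ((103/100) * x * B) := by
      nlinarith
    nlinarith
  have hq1 : 1/m ≤ s/t := by
    rw [ht, div_le_div_iff₀ hm0 (by positivity)]
    nlinarith
  -- assemble
  have h1 : u * ((103/100) * x * B) ≤ (103/100) * ((11/12) * (s/t)) * B := by
    have := mul_le_mul_of_nonneg_right hux hBpos.le
    nlinarith [this]
  have h3 : (1/m) * (6/25) ≤ (s/t) * B :=
    mul_le_mul hq1 hBlb (by norm_num) hq0.le
  have hm' : (0:ℝ) < 1/m := by positivity
  have h4 : (1:ℝ)/100 / m ≤ (67:ℝ)/1200 * ((1/m) * (6/25)) := by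
    have e1 : (1:ℝ)/100/m = (1/100)*(1/m) := by ring
    have e2 : (67:ℝ)/1200*((1/m)*(6/25)) = (67/5000)*(1/m) := by ring
    rw [e1, e2]
    linarith
  linarith [hterm1, h1, h3, h4]
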